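/- Assume the 45 real numbers 1, e_i (1 ≤ i ≤ 8), and e_i·e_j (1 ≤ i ≤ j ≤ 8) are linearly independent over ℚ, and |(e,e)| ≤ 1/2 where (e,e) = −eᵀCe. Then for every (s,r) ∈ ℝ² there is no d ∈ L with Q(d,d) = −2 and Q(d,f₁(s,r)) = Q(d,f₂(s,r)) = Q(d,f₃(s,r)) = 0. -/

import Mathlib

open scoped BigOperators

/-- The Cartan matrix of E8 (Bourbaki numbering, 0-indexed): diagonal entries 2,
entry -1 exactly for the edges of the E8 Dynkin diagram. -/
def E8Cartan : Matrix (Fin 8) (Fin 8) ℤ :=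
  !![ 2,  0, -1,  0,  0,  0,  0,  0;
      0,  2,  0, -1,  0,  0,  0,  0;
     -1,  0,  2, -1,  0,  0,  0,  0;
      0, -1, -1,  2, -1,  0,  0,  0;
      0,  0,  0, -1,  2, -1,  0,  0;
      0,  0,  0,  0, -1,  2, -1,  0;
      0,  0,  0,  0,  0, -1,  2, -1;
      0,  0,  0,  0,  0,  0, -1,  2]

/-- Integer value `dᵀ C d'` of the E8 Cartan pairing. -/
def pairCZ (d d' : Fin 8 → ℤ) : ℤ := ∑ i, ∑ j, d i * E8Cartan i j * d' j

/-- Real value `wᵀ C w'` of the (real extension of the) E8 Cartan pairing. -/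
def pairCR (w w' : Fin 8 → ℝ) : ℝ := ∑ i, ∑ j, w i * (E8Cartan i j : ℝ) * w' j

/-- The `−E8` pairing, real coefficients. -/
def innE8R (w w' : Fin 8 → ℝ) : ℝ := -pairCR w w'

/-- The `−E8` pairing, integer coefficients. -/
def innE8Z (d d' : Fin 8 → ℤ) : ℤ := -pairCZ d d'

/-- The K3 lattice `L = ℤ⁶ ⊕ ℤ⁸ ⊕ ℤ⁸`. -/
abbrev LZ := (Fin 6 → ℤ) × (Fin 8 → ℤ) × (Fin 8 → ℤ)

/-- `L_ℝ = ℝ⁶ ⊕ ℝ⁸ ⊕ ℝ⁸`. -/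
abbrev LR := (Fin 6 → ℝ) × (Fin 8 → ℝ) × (Fin 8 → ℝ)

/-- The K3 bilinear form `Q` (integer version).  Coordinates `0,…,5` of the first
factor are `u, v, x, y, z, t`; one has `Q(u,v) = Q(x,y) = Q(z,t) = 1`, all other
pairings among `u,…,t` vanish, each `ℤ⁸` factor carries `−C`, and the three
factors are mutually orthogonal. -/
def QZ (d d' : LZ) : ℤ :=
  (d.1 0 * d'.1 1 + d.1 1 * d'.1 0 + d.1 2 * d'.1 3 + d.1 3 * d'.1 2
    + d.1 4 * d'.1 5 + d.1 5 * d'.1 4)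
  - pairCZ d.2.1 d'.2.1 - pairCZ d.2.2 d'.2.2

/-- The K3 bilinear form `Q`, extended `ℝ`-bilinearly to `L_ℝ`. -/
def QR (w w' : LR) : ℝ :=
  (w.1 0 * w'.1 1 + w.1 1 * w'.1 0 + w.1 2 * w'.1 3 + w.1 3 * w'.1 2
    + w.1 4 * w'.1 5 + w.1 5 * w'.1 4)
  - pairCR w.2.1 w'.2.1 - pairCR w.2.2 w'.2.2

/-- The inclusion `L → L_ℝ`. -/
def incl (d : LZ) : LR :=
  (fun i => (d.1 i : ℝ), fun i => (d.2.1 i : ℝ), fun i => (d.2.2 i : ℝ))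

/-- The family of 45 real numbers `1`, `eᵢ` (`1 ≤ i ≤ 8`) and `eᵢ·eⱼ` (`1 ≤ i ≤ j ≤ 8`). -/
def fam45 (e : Fin 8 → ℝ) : Option (Fin 8 ⊕ {p : Fin 8 × Fin 8 // p.1 ≤ p.2}) → ℝ
  | none => 1
  | some (Sum.inl i) => e i
  | some (Sum.inr p) => e p.1.1 * e p.1.2

/-- `φ` on the `ℤ⁶`/`ℝ⁶` factor: `u ↦ u`, `v ↦ v + p·y`, `x ↦ x − p·u`, `y ↦ y`,
`z ↦ z`, `t ↦ t` (in coordinates). -/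
def phi6 (p : ℤ) {R : Type*} [Ring R] (w : Fin 6 → R) : Fin 6 → R :=
  ![w 0 - (p : R) * w 2, w 1, w 2, (p : R) * w 1 + w 3, w 4, w 5]

/-- `φ : L → L`, identity on the two `ℤ⁸` factors. -/
def phiZ (p : ℤ) (d : LZ) : LZ := (phi6 p d.1, d.2.1, d.2.2)

/-- The `ℝ`-linear extension of `φ`. -/
def phiR (p : ℤ) (w : LR) : LR := (phi6 p w.1, w.2.1, w.2.2)

/-- `ψ` on the `ℤ⁶`/`ℝ⁶` factor: `u ↦ u`, `v ↦ v + q·t`, `x ↦ x − n·z + q·n·u`,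
`y ↦ y`, `z ↦ z − q·u`, `t ↦ t + n·y` (in coordinates). -/
def psi6 (n q : ℤ) {R : Type*} [Ring R] (w : Fin 6 → R) : Fin 6 → R :=
  ![w 0 + (q : R) * (n : R) * w 2 - (q : R) * w 4, w 1, w 2,
    w 3 + (n : R) * w 5, w 4 - (n : R) * w 2, (q : R) * w 1 + w 5]

/-- `ψ : L → L`, identity on the two `ℤ⁸` factors. -/
def psiZ (n q : ℤ) (d : LZ) : LZ := (psi6 n q d.1, d.2.1, d.2.2)

/-- The `ℝ`-linear extension of `ψ`. -/
def psiR (n q : ℤ) (w : LR) : LR := (psi6 n q w.1, w.2.1, w.2.2)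

/-- `f₁(s,r) = 2u + v + s·y + r·t`. -/
def f1 (s r : ℝ) : LR := (![2, 1, 0, s, 0, r], 0, 0)

/-- `f₂(s,r) = q·x + (n·r² − q·s)·u − n·r·z + 2q·y + a`, where `a = (0, e)`. -/
def f2 (n q : ℤ) (e : Fin 8 → ℝ) (s r : ℝ) : LR :=
  (![(n : ℝ) * r ^ 2 - (q : ℝ) * s, 0, (q : ℝ), 2 * (q : ℝ), -((n : ℝ) * r), 0], 0, e)

/-- `f₃(s,r) = z − r·u + 2q²·t + 2nqr·y + b`, where `b = (e, 0)`. -/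
def f3 (n q : ℤ) (e : Fin 8 → ℝ) (s r : ℝ) : LR :=
  (![-r, 0, 0, 2 * (n : ℝ) * (q : ℝ) * r, 1, 2 * (q : ℝ) ^ 2], e, 0)

/-!
Write `d = (v, m, l)`, where `v₀, …, v₅` are the coordinates of `d` on `u, v, x, y, z, t`, and put
`X = mᵀ C e`, `Y = lᵀ C e`. The orthogonality conditions are polynomial equations in `s, r, X, Y`
with integer coefficients. Eliminating `s` and `r` between them leaves a relation of degree at most
two in `X` and `Y`; by the linear independence of `1, eᵢ, eᵢeⱼ` all its coefficients vanish, which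
yields integer identities among the `vᵢ` and forces `C m` or `C l` to vanish. Together with
`Q(d,d) = -2` and the positivity of `C`, these identities are contradictory in each of the cases
`v₂ = 0`, `v₁ = 0`, `v₁ = 2nq v₂` and the generic one. Only the case `v₁ = 2nq v₂` needs the
bound on `(e,e)`: completing the square in `r` gives `v₂ Y ≥ lᵀCl / 2 + v₂²`, whereas positivity
of `C` on `l - 2v₂ e` gives `4 v₂ Y ≤ lᵀCl + 4 v₂² eᵀCe`.
-/

open Matrix

theorem pairCR_apply (x y : Fin 8 → ℝ) :
    pairCR x y = 2*x 0*y 0 - x 0*y 2 + 2*x 1*y 1 - x 1*y 3 - x 2*y 0 + 2*x 2*y 2 - x 2*y 3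
      - x 3*y 1 - x 3*y 2 + 2*x 3*y 3 - x 3*y 4 - x 4*y 3 + 2*x 4*y 4 - x 4*y 5 - x 5*y 4
      + 2*x 5*y 5 - x 5*y 6 - x 6*y 5 + 2*x 6*y 6 - x 6*y 7 - x 7*y 6 + 2*x 7*y 7 := by
  simp only [pairCR, E8Cartan, Int.reduceNeg, of_apply, cons_val', cons_val_fin_one,
    Fin.sum_univ_eight, Fin.isValue, cons_val_zero, cons_val_one, cons_val, Int.cast_ofNat,
    Int.cast_zero, mul_zero, zero_mul, add_zero, Int.cast_neg, Int.cast_one, mul_neg, mul_one,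
    neg_mul, zero_add]
  ring

theorem pairCR_self_nonneg (x : Fin 8 → ℝ) : 0 ≤ pairCR x x := by
  have h : pairCR x x = 2 * (x 0 - x 2 / 2) ^ 2 + 2 * (x 1 - x 3 / 2) ^ 2
      + 3 / 2 * (x 2 - 2 / 3 * x 3) ^ 2 + 5 / 6 * (x 3 - 6 / 5 * x 4) ^ 2
      + 4 / 5 * (x 4 - 5 / 4 * x 5) ^ 2 + 3 / 4 * (x 5 - 4 / 3 * x 6) ^ 2
      + 2 / 3 * (x 6 - 3 / 2 * x 7) ^ 2 + 1 / 2 * x 7 ^ 2 := by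
    rw [pairCR_apply]; ring
  rw [h]; positivity

theorem pairCR_zero_right (x : Fin 8 → ℝ) : pairCR x 0 = 0 := by
  simp [pairCR]

theorem pairCR_sub_smul_self (x y : Fin 8 → ℝ) (c : ℝ) :
    pairCR (x - c • y) (x - c • y) = pairCR x x - 2 * c * pairCR x y + c ^ 2 * pairCR y y := by
  simp only [pairCR_apply, Pi.sub_apply, Pi.smul_apply, smul_eq_mul]
  ring

theorem intCast_pairCZ (w w' : Fin 8 → ℤ) :
    (pairCZ w w' : ℝ) = pairCR (fun i => (w i : ℝ)) (fun i => (w' i : ℝ)) := by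
  simp [pairCZ, pairCR]

theorem pairCZ_self_nonneg (w : Fin 8 → ℤ) : 0 ≤ pairCZ w w := by
  have := pairCR_self_nonneg (fun i => (w i : ℝ))
  rw [← intCast_pairCZ] at this
  exact_mod_cast this

theorem pairCR_intCast_left (w : Fin 8 → ℤ) (x : Fin 8 → ℝ) :
    pairCR (fun i => (w i : ℝ)) x = ∑ j, ((w ᵥ* E8Cartan) j : ℝ) * x j := by
  simp only [pairCR, Matrix.vecMul, dotProduct, Int.cast_sum, Int.cast_mul, Finset.sum_mul]
  exact Finset.sum_comm

theorem pairCZ_self_eq_zero_of_vecMul_eq_zero {w : Fin 8 → ℤ} (h : w ᵥ* E8Cartan = 0) :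
    pairCZ w w = 0 := by
  have : pairCZ w w = (w ᵥ* E8Cartan) ⬝ᵥ w := by
    simp only [pairCZ, Matrix.vecMul, dotProduct, Finset.sum_mul]
    exact Finset.sum_comm
  rw [this, h, zero_dotProduct]

theorem Fintype.sum_subtype_le_symmetrize {ι M : Type*} [Fintype ι] [LinearOrder ι]
    [AddCommMonoid M] (F : ι → ι → M) :
    ∑ p : {p : ι × ι // p.1 ≤ p.2},
        (if p.1.1 = p.1.2 then F p.1.1 p.1.1 else F p.1.1 p.1.2 + F p.1.2 p.1.1) =
      ∑ i, ∑ j, F i j := by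
  rw [← Finset.sum_subtype (Finset.univ.filter fun p : ι × ι => p.1 ≤ p.2) (by simp)
    (fun p : ι × ι => if p.1 = p.2 then F p.1 p.1 else F p.1 p.2 + F p.2 p.1),
    Finset.sum_filter, Fintype.sum_prod_type]
  have hswap :
      ∑ i, ∑ j, (if j < i then F i j else 0) = ∑ i, ∑ j, (if i < j then F j i else 0) :=
    Finset.sum_comm
  calc ∑ i, ∑ j, (if i ≤ j then (if i = j then F i i else F i j + F j i) else 0)
      = ∑ i, ∑ j, ((if i ≤ j then F i j else 0) + (if i < j then F j i else 0)) := by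
        refine Finset.sum_congr rfl fun i _ => Finset.sum_congr rfl fun j _ => ?_
        rcases lt_trichotomy i j with h | rfl | h
        · simp [h.le, h, h.ne]
        · simp
        · simp [h.not_ge, h.not_gt]
    _ = ∑ i, ∑ j, ((if i ≤ j then F i j else 0) + (if j < i then F i j else 0)) := by
        simp only [Finset.sum_add_distrib, hswap]
    _ = ∑ i, ∑ j, F i j := by
        refine Finset.sum_congr rfl fun i _ => Finset.sum_congr rfl fun j _ => ?_
        rcases le_or_gt i j with h | h
        · simp [h, h.not_gt]
        · simp [h, h.not_ge]

theorem fam45_relation_coeffs {e : Fin 8 → ℝ} (he : LinearIndependent ℚ (fam45 e)) {c : ℚ}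
    {b : Fin 8 → ℚ} {a : Fin 8 → Fin 8 → ℚ}
    (h : (c : ℝ) + ∑ i, (b i : ℝ) * e i + ∑ i, ∑ j, (a i j : ℝ) * (e i * e j) = 0) :
    c = 0 ∧ b = 0 ∧ ∀ i j, a i j + a j i = 0 := by
  let g : Option (Fin 8 ⊕ {p : Fin 8 × Fin 8 // p.1 ≤ p.2}) → ℚ
    | none => c
    | some (Sum.inl i) => b i
    | some (Sum.inr p) =>
      if p.1.1 = p.1.2 then a p.1.1 p.1.1 else a p.1.1 p.1.2 + a p.1.2 p.1.1
  have hsum : ∑ x, g x • fam45 e x = 0 := by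
    rw [← h, ← Fintype.sum_subtype_le_symmetrize fun i j => (a i j : ℝ) * (e i * e j),
      Fintype.sum_option, Fintype.sum_sum_type]
    simp only [g, fam45, Rat.smul_def, mul_one]
    rw [add_assoc]
    congr 2
    refine Finset.sum_congr rfl fun p _ => ?_
    split_ifs with hp
    · rw [hp]
    · push_cast; ring
  have hg := Fintype.linearIndependent_iff.mp he g hsum
  refine ⟨hg none, funext fun i => hg (some (.inl i)), fun i j => ?_⟩
  rcases lt_trichotomy i j with hij | rfl | hij
  · simpa [g, hij.ne] using hg (some (.inr ⟨(i, j), hij.le⟩))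
  · simpa [g] using hg (some (.inr ⟨(i, i), le_rfl⟩))
  · simpa [g, hij.ne, add_comm] using hg (some (.inr ⟨(j, i), hij.le⟩))

theorem pairCR_quadratic_relation {e : Fin 8 → ℝ} (he : LinearIndependent ℚ (fam45 e))
    {t a b z : ℤ} {m l : Fin 8 → ℤ}
    (h : t * pairCR (fun i => (m i : ℝ)) e ^ 2 + a * pairCR (fun i => (m i : ℝ)) e
      + b * pairCR (fun i => (l i : ℝ)) e + z = 0) :
    z = 0 ∧ a • (m ᵥ* E8Cartan) + b • (l ᵥ* E8Cartan) = 0 ∧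
      (t = 0 ∨ m ᵥ* E8Cartan = 0) := by
  rw [pairCR_intCast_left, pairCR_intCast_left] at h
  set B := m ᵥ* E8Cartan
  set A := l ᵥ* E8Cartan
  have hquad : t * (∑ j, (B j : ℝ) * e j) ^ 2
      = ∑ i, ∑ j, ((t * B i * B j : ℤ) : ℝ) * (e i * e j) := by
    rw [sq, Finset.sum_mul_sum, Finset.mul_sum]
    refine Finset.sum_congr rfl fun i _ => ?_
    rw [Finset.mul_sum]
    refine Finset.sum_congr rfl fun j _ => ?_
    push_cast; ring
  have hsum : a * ∑ j, (B j : ℝ) * e j + b * ∑ j, (A j : ℝ) * e j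
      = ∑ j, ((a * B j + b * A j : ℤ) : ℝ) * e j := by
    rw [Finset.mul_sum, Finset.mul_sum, ← Finset.sum_add_distrib]
    refine Finset.sum_congr rfl fun j _ => ?_
    push_cast; ring
  obtain ⟨hz, hlin, hsymm⟩ := fam45_relation_coeffs he (c := z)
    (b := fun j => (a * B j + b * A j : ℤ)) (a := fun i j => (t * B i * B j : ℤ)) (by
      simp only [Rat.cast_intCast]
      linear_combination h - hquad - hsum)
  refine ⟨by exact_mod_cast hz, funext fun j => ?_, ?_⟩
  · have hj := congrFun hlin j
    simp only [Pi.zero_apply] at hj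
    simp only [Pi.add_apply, Pi.smul_apply, smul_eq_mul, Pi.zero_apply]
    exact_mod_cast hj
  refine or_iff_not_imp_left.2 fun ht => funext fun i => ?_
  have hii : t * B i ^ 2 = 0 := by
    have := hsymm i i
    push_cast at this
    exact_mod_cast (by linear_combination this / 2 : (t * B i ^ 2 : ℚ) = 0)
  simpa [ht] using hii

theorem pairCR_linear_relation {e : Fin 8 → ℝ} (he : LinearIndependent ℚ (fam45 e))
    {a b z : ℤ} {m l : Fin 8 → ℤ}
    (h : a * pairCR (fun i => (m i : ℝ)) e + b * pairCR (fun i => (l i : ℝ)) e + z = 0) :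
    z = 0 ∧ a • (m ᵥ* E8Cartan) + b • (l ᵥ* E8Cartan) = 0 :=
  (pairCR_quadratic_relation he (t := 0) (by push_cast; linear_combination h)).imp_right And.left

theorem Int.one_le_sq_of_ne_zero {a : ℤ} (h : a ≠ 0) : 1 ≤ a ^ 2 :=
  (one_le_sq_iff_one_le_abs a).2 (Int.one_le_abs h)

def IsOrthogonalRoot (n q : ℤ) (e : Fin 8 → ℝ) (s r : ℝ) (d : LZ) : Prop :=
  QZ d d = -2 ∧ QR (incl d) (f1 s r) = 0 ∧ QR (incl d) (f2 n q e s r) = 0 ∧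
    QR (incl d) (f3 n q e s r) = 0

namespace IsOrthogonalRoot

variable {n q : ℤ} {e : Fin 8 → ℝ} {s r : ℝ} {v : Fin 6 → ℤ} {m l : Fin 8 → ℤ}

theorem equations (hd : IsOrthogonalRoot n q e s r (v, m, l)) :
    2 * (v 0 * v 1 + v 2 * v 3 + v 4 * v 5) - pairCZ m m - pairCZ l l = -2 ∧
    (v 0 : ℝ) + 2 * v 1 + s * v 2 + r * v 4 = 0 ∧
    (v 1 : ℝ) * (n * r ^ 2 - q * s) + 2 * q * v 2 + q * v 3 - n * r * v 5
      - pairCR (fun i => (l i : ℝ)) e = 0 ∧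
    -(r * v 1) + 2 * n * q * r * v 2 + 2 * q ^ 2 * v 4 + v 5
      - pairCR (fun i => (m i : ℝ)) e = 0 := by
  obtain ⟨h4, h1, h2, h3⟩ := hd
  simp only [QZ, QR, incl, f1, f2, f3, Fin.isValue, Int.reduceNeg, cons_val_one, cons_val_zero,
    cons_val, mul_one, mul_zero, add_zero, zero_add, mul_neg, sub_zero, pairCR_zero_right]
    at h4 h1 h2 h3
  refine ⟨by linear_combination h4, by linear_combination h1, by linear_combination h2,
    by linear_combination h3⟩

theorem x_ne_zero (he : LinearIndependent ℚ (fam45 e)) (hq : q ≠ 0)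
    (hd : IsOrthogonalRoot n q e s r (v, m, l)) : v 2 ≠ 0 := by
  intro hx
  obtain ⟨h4, h1, h2, h3⟩ := hd.equations
  have hxR : (v 2 : ℝ) = 0 := by exact_mod_cast hx
  obtain ⟨hz, -⟩ := pairCR_linear_relation he (m := m) (l := l) (a := -v 4) (b := 0)
    (z := v 0 * v 1 + 2 * v 1 ^ 2 + 2 * q ^ 2 * v 4 ^ 2 + v 4 * v 5)
    (by push_cast; linear_combination (v 4 : ℝ) * h3 + (v 1 : ℝ) * h1
      - (2 * n * q * r * v 4 + s * v 1) * hxR)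
  have hM := pairCZ_self_nonneg m
  have hN := pairCZ_self_nonneg l
  rw [hx] at h4
  have hv1 : v 1 = 0 := by
    by_contra h
    nlinarith [Int.one_le_sq_of_ne_zero h, sq_nonneg (q * v 4)]
  have hv4 : v 4 = 0 := by
    by_contra h
    nlinarith [Int.one_le_sq_of_ne_zero (mul_ne_zero hq h), sq_nonneg (v 1)]
  have hv1R : (v 1 : ℝ) = 0 := by exact_mod_cast hv1
  have hv4R : (v 4 : ℝ) = 0 := by exact_mod_cast hv4
  obtain ⟨hv5, hmC⟩ := pairCR_linear_relation he (m := m) (l := l) (a := -1) (b := 0) (z := v 5)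
    (by push_cast; linear_combination h3 + r * hv1R - 2 * n * q * r * hxR - 2 * q ^ 2 * hv4R)
  have hv5R : (v 5 : ℝ) = 0 := by exact_mod_cast hv5
  obtain ⟨-, hlC⟩ := pairCR_linear_relation he (m := l) (l := l) (a := -1) (b := 0)
    (z := q * v 3)
    (by push_cast; linear_combination h2 - (n * r ^ 2 - q * s) * hv1R - 2 * q * hxR + n * r * hv5R)
  simp only [neg_one_smul, zero_smul, add_zero, neg_eq_zero] at hmC hlC
  rw [pairCZ_self_eq_zero_of_vecMul_eq_zero hmC, pairCZ_self_eq_zero_of_vecMul_eq_zero hlC,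
    hv1, hv4] at h4
  omega

theorem v_ne_zero (he : LinearIndependent ℚ (fam45 e)) (hq : q ≠ 0)
    (hd : IsOrthogonalRoot n q e s r (v, m, l)) (hx : v 2 ≠ 0) : v 1 ≠ 0 := by
  intro hv
  obtain ⟨h4, -, h2, h3⟩ := hd.equations
  have hvR : (v 1 : ℝ) = 0 := by exact_mod_cast hv
  obtain ⟨hz, -⟩ := pairCR_linear_relation he (m := m) (l := l) (a := -v 5)
    (b := -(2 * q * v 2))
    (z := 4 * q ^ 2 * v 2 ^ 2 + 2 * q ^ 2 * (v 2 * v 3 + v 4 * v 5) + v 5 ^ 2)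
    (by push_cast; linear_combination 2 * q * v 2 * h2 + v 5 * h3
      - (2 * q * v 2 * (n * r ^ 2 - q * s) - r * v 5) * hvR)
  rw [hv] at h4
  nlinarith [mul_nonneg (sq_nonneg q) (pairCZ_self_nonneg m),
    mul_nonneg (sq_nonneg q) (pairCZ_self_nonneg l), sq_nonneg (v 5),
    mul_le_mul_of_nonneg_left (Int.one_le_sq_of_ne_zero hx) (sq_nonneg q),
    Int.one_le_sq_of_ne_zero hq]

theorem v_ne (he : LinearIndependent ℚ (fam45 e)) (hee : pairCR e e ≤ 1 / 2) (hq : 0 < q)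
    (hd : IsOrthogonalRoot n q e s r (v, m, l)) (hx : v 2 ≠ 0) : v 1 ≠ 2 * n * q * v 2 := by
  intro hv
  obtain ⟨h4, h1, h2, h3⟩ := hd.equations
  have hvR : (v 1 : ℝ) = 2 * n * q * v 2 := by exact_mod_cast hv
  obtain ⟨hz, -⟩ := pairCR_linear_relation he (m := m) (l := l) (a := -1) (b := 0)
    (z := 2 * q ^ 2 * v 4 + v 5) (by push_cast; linear_combination h3 + r * hvR)
  have hzR : (2 * q ^ 2 * v 4 + v 5 : ℝ) = 0 := by exact_mod_cast hz
  have h4R : (2 * (v 0 * v 1 + v 2 * v 3 + v 4 * v 5) - pairCZ m m - pairCZ l l : ℝ) = -2 := by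
    exact_mod_cast h4
  set Y := pairCR (fun i => (l i : ℝ)) e
  have hY : 2 * q * (n * v 2 * r + q * v 4) ^ 2
      + q * ((pairCZ m m + pairCZ l l : ℝ) / 2 - 1 + 2 * v 1 ^ 2 + 2 * v 2 ^ 2) = v 2 * Y := by
    linear_combination (v 2 : ℝ) * h2 + q * v 1 * h1 - q / 2 * h4R
      - (n * v 2 * r ^ 2 + q * v 4 * r) * hvR + (n * v 2 * r + q * v 4) * hzR
  have hpsd := pairCR_self_nonneg ((fun i => (l i : ℝ)) - (2 * v 2 : ℝ) • e)
  rw [pairCR_sub_smul_self, ← intCast_pairCZ] at hpsd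
  have hM : (0 : ℝ) ≤ pairCZ m m := by exact_mod_cast pairCZ_self_nonneg m
  have hN : (0 : ℝ) ≤ pairCZ l l := by exact_mod_cast pairCZ_self_nonneg l
  have hx1 : (1 : ℝ) ≤ v 2 ^ 2 := by exact_mod_cast Int.one_le_sq_of_ne_zero hx
  have hq1 : (1 : ℝ) ≤ q := by exact_mod_cast hq
  have hK : (0 : ℝ) ≤ (pairCZ m m + pairCZ l l : ℝ) / 2 - 1 + 2 * v 1 ^ 2 + 2 * v 2 ^ 2 := by
    nlinarith [sq_nonneg (v 1 : ℝ)]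
  nlinarith [mul_nonneg (sub_nonneg.2 hq1) hK,
    mul_nonneg (sq_nonneg (v 2 : ℝ)) (sub_nonneg.2 hee),
    sq_nonneg (n * v 2 * r + q * v 4 : ℝ)]

theorem v_eq (he : LinearIndependent ℚ (fam45 e)) (hn : n ≠ 0) (hq : 0 < q)
    (hd : IsOrthogonalRoot n q e s r (v, m, l)) (hv : v 1 ≠ 0) (hx : v 2 ≠ 0) :
    v 1 = 2 * n * q * v 2 := by
  by_contra hc
  obtain ⟨h4, h1, h2, h3⟩ := hd.equations
  set c := 2 * n * q * v 2 - v 1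
  have hc0 : c ≠ 0 := fun h => hc (by linarith)
  set w := 2 * q ^ 2 * v 4 + v 5
  set β := q * v 1 * v 4 - n * v 2 * v 5
  set K := q * (v 0 * v 1 + 2 * v 1 ^ 2 + 2 * v 2 ^ 2 + v 2 * v 3)
  -- `c² (v₂·(f₂) + q v₁·(f₁))` is free of `s`; substituting `r c = X - w` from `(f₃)` turns it
  -- into a quadratic relation in `X`
  obtain ⟨hz, hlin, hmC⟩ := pairCR_quadratic_relation he (m := m) (l := l) (t := n * v 1 * v 2)
    (a := β * c - 2 * (n * v 1 * v 2) * w) (b := -(v 2 * c ^ 2))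
    (z := n * v 1 * v 2 * w ^ 2 - β * c * w + K * c ^ 2)
    (by
      simp only [c, w, β, K]
      push_cast
      linear_combination (2 * n * q * v 2 - v 1 : ℝ) ^ 2 * ((v 2 : ℝ) * h2 + q * v 1 * h1)
        - (n * v 1 * v 2 * (pairCR (fun i => (m i : ℝ)) e - (2 * q ^ 2 * v 4 + v 5)
            + r * (2 * n * q * v 2 - v 1))
          + (q * v 1 * v 4 - n * v 2 * v 5) * (2 * n * q * v 2 - v 1)) * h3)
  have hmC : m ᵥ* E8Cartan = 0 := hmC.resolve_left (mul_ne_zero (mul_ne_zero hn hv) hx)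
  have hlC : l ᵥ* E8Cartan = 0 := by
    rw [hmC, smul_zero, zero_add, smul_eq_zero] at hlin
    exact hlin.resolve_left (neg_ne_zero.2 (mul_ne_zero hx (pow_ne_zero 2 hc0)))
  rw [pairCZ_self_eq_zero_of_vecMul_eq_zero hmC, pairCZ_self_eq_zero_of_vecMul_eq_zero hlC] at h4
  have h4' : v 0 * v 1 + v 2 * v 3 + v 4 * v 5 = -1 := by linarith
  have hsq : 2 * q * (q * v 1 * v 4 + n * v 2 * v 5) ^ 2
      + q * c ^ 2 * (2 * v 1 ^ 2 + 2 * v 2 ^ 2 - 1) = 0 := by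
    linear_combination hz - q * c ^ 2 * h4'
  have hpos : 0 < q * c ^ 2 * (2 * v 1 ^ 2 + 2 * v 2 ^ 2 - 1) :=
    mul_pos (mul_pos hq (by positivity))
      (by nlinarith [Int.one_le_sq_of_ne_zero hv, sq_nonneg (v 2)])
  nlinarith [mul_nonneg hq.le (sq_nonneg (q * v 1 * v 4 + n * v 2 * v 5))]

end IsOrthogonalRoot

theorem statement13_general (e : Fin 8 → ℝ) (he : LinearIndependent ℚ (fam45 e))
    (he' : |innE8R e e| ≤ 1 / 2)
    (n q : ℤ) (hn : 1 ≤ n) (hq : 1 ≤ q) (s r : ℝ) :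
    ¬ ∃ d : LZ, QZ d d = -2 ∧ QR (incl d) (f1 s r) = 0 ∧
      QR (incl d) (f2 n q e s r) = 0 ∧ QR (incl d) (f3 n q e s r) = 0 := by
  rintro ⟨⟨v, m, l⟩, hd⟩
  have hd : IsOrthogonalRoot n q e s r (v, m, l) := hd
  have hee : pairCR e e ≤ 1 / 2 := by
    have := (abs_le.1 he').1
    rw [innE8R] at this
    linarith
  have hq0 : 0 < q := by omega
  have hx := hd.x_ne_zero he hq0.ne'
  have hv := hd.v_ne_zero he hq0.ne' hx
  exact hd.v_ne he hee hq0 hx (hd.v_eq he (by omega) hq0 hv hx)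

/-- If the 45 numbers `1`, `eᵢ`, `eᵢ·eⱼ` are linearly independent over `ℚ` and
`|(e,e)| ≤ 1/2`, then for every `(s,r) ∈ ℝ²` there is no `d ∈ L` with
`Q(d,d) = −2` and `Q(d,f₁(s,r)) = Q(d,f₂(s,r)) = Q(d,f₃(s,r)) = 0`. -/
theorem statement13 (e : Fin 8 → ℝ) (he : LinearIndependent ℚ (fam45 e))
    (he' : |innE8R e e| ≤ 1 / 2)
    (n p q : ℤ) (hn : 1 ≤ n) (hp : 1 ≤ p) (hq : 1 ≤ q) (s r : ℝ) :
    ¬ ∃ d : LZ, QZ d d = -2 ∧ QR (incl d) (f1 s r) = 0 ∧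
      QR (incl d) (f2 n q e s r) = 0 ∧ QR (incl d) (f3 n q e s r) = 0 :=
  statement13_general e he he' n q hn hq s r
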